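/- Consider the weighted graph built from vector sets A, B ⊆ {0,1}^d and index set I: weight-t edges a → i iff a[i]=1, weight-1 edges i → b iff b[i]=1, and weight-(t+1) edges i → a for all i ∈ I, a ∈ A. If a ∈ A and b ∈ B are orthogonal (and every vector has at least one 1-coordinate), then every directed path from a to b has total weight at least 3t+2, and there is no path from b to a. -/

import Mathlib

/-- Weight of a shortest directed path from `a` to `b` in the digraph with
edge relation `E` and edge weights `w`; `⊤` if there is no path. -/
noncomputable def wdist {V : Type*} (E : V → V → Prop) (w : V → V → ENNReal) (a b : V) : ENNReal :=
  sInf {c : ENNReal | ∃ l : List V, List.Chain E a l ∧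
    (a :: l).getLast (List.cons_ne_nil a l) = b ∧
    c = (List.zip (a :: l) l).foldr (fun p acc => w p.1 p.2 + acc) 0}

/-- The weighted OV graph: red vertices A (type α), blue vertices B (type β)
and index vertices \`Fin d\`. Edges: a → i of weight t when a[i] = 1,
i → b of weight 1 when b[i] = 1, and i → a of weight t+1 for all i, a. -/
def wovE (d : ℕ) {α β : Type*} (vA : α → Fin d → Bool) (vB : β → Fin d → Bool) :
    (α ⊕ (β ⊕ Fin d)) → (α ⊕ (β ⊕ Fin d)) → Prop :=
  fun u v => match u, v with
  | Sum.inl a, Sum.inr (Sum.inr i) => vA a i = true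
  | Sum.inr (Sum.inr i), Sum.inr (Sum.inl b) => vB b i = true
  | Sum.inr (Sum.inr _), Sum.inl _ => True
  | _, _ => False

/-- The weights of the weighted OV graph. -/
noncomputable def wovW (t d : ℕ) {α β : Type*} :
    (α ⊕ (β ⊕ Fin d)) → (α ⊕ (β ⊕ Fin d)) → ENNReal :=
  fun u v => match u, v with
  | Sum.inl _, Sum.inr (Sum.inr _) => (t : ENNReal)
  | Sum.inr (Sum.inr _), Sum.inr (Sum.inl _) => 1
  | Sum.inr (Sum.inr _), Sum.inl _ => (t : ENNReal) + 1
  | _, _ => 0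

/-!
The weighted distance to `b` is a feasible potential: along every edge `u → v` it drops by at most
`w(u, v)`, so summing along a walk bounds its weight by the drop from `a` to `b`. Since every index
of `a` misses `b`, a walk from `a` must return to the red side before it can enter `b`, and the
distance from `a` is `t + (t + 1) + t + 1 = 3t + 2`. The blue vertex `b` is a sink, so nothing
other than `b` is reachable from it.
-/

noncomputable def pathWeight {V : Type*} (w : V → V → ENNReal) (u : V) (l : List V) : ENNReal :=
  (List.zip (u :: l) l).foldr (fun p acc => w p.1 p.2 + acc) 0

@[simp]
lemma pathWeight_nil {V : Type*} (w : V → V → ENNReal) (u : V) : pathWeight w u [] = 0 := rfl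

lemma pathWeight_cons {V : Type*} (w : V → V → ENNReal) (u x : V) (l : List V) :
    pathWeight w u (x :: l) = w u x + pathWeight w x l := rfl

section Potential

variable {V : Type*} {E : V → V → Prop} {w : V → V → ENNReal} {φ : V → ENNReal}

lemma le_pathWeight_add_of_potential (hφ : ∀ u v, E u v → φ u ≤ w u v + φ v) :
    ∀ {u : V} {l : List V}, List.IsChain E (u :: l) →
      φ u ≤ pathWeight w u l + φ ((u :: l).getLast (List.cons_ne_nil u l))
  | u, [], _ => by simp
  | u, x :: l, hchain => by
    obtain ⟨hux, hchain⟩ := List.isChain_cons_cons.mp hchain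
    calc φ u ≤ w u x + φ x := hφ u x hux
      _ ≤ w u x + (pathWeight w x l + φ ((x :: l).getLast (List.cons_ne_nil x l))) := by
        gcongr; exact le_pathWeight_add_of_potential hφ hchain
      _ = _ := by rw [pathWeight_cons, add_assoc, List.getLast_cons_cons]

lemma le_wdist_of_potential (hφ : ∀ u v, E u v → φ u ≤ w u v + φ v) {a b : V} (hb : φ b = 0) :
    φ a ≤ wdist E w a b := by
  refine le_sInf ?_
  rintro c ⟨l, hchain, rfl, rfl⟩
  have h := le_pathWeight_add_of_potential hφ hchain
  rwa [hb, add_zero] at h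

end Potential

section WeightedOV

variable {α β : Type*} {t d : ℕ} {vA : α → Fin d → Bool} {vB : β → Fin d → Bool}

open Classical in
/-- The weighted distance to the blue vertex `b`: a red vertex sharing a coordinate with `b` reaches
it by `a' → i → b`, an orthogonal one needs the detour `a' → i → a'' → i' → b`. -/
noncomputable def distToBlue (t : ℕ) (vA : α → Fin d → Bool) (vB : β → Fin d → Bool) (b : β) :
    α ⊕ (β ⊕ Fin d) → ENNReal
  | Sum.inl a' => if ∃ i, vA a' i = true ∧ vB b i = true then t + 1 else 3 * t + 2
  | Sum.inr (Sum.inl b') => if b' = b then 0 else ⊤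
  | Sum.inr (Sum.inr i) => if vB b i = true then 1 else 2 * t + 2

lemma distToBlue_le_add (b : β) (u v : α ⊕ (β ⊕ Fin d)) (huv : wovE d vA vB u v) :
    distToBlue t vA vB b u ≤ wovW t d u v + distToBlue t vA vB b v := by
  rcases u with a' | b' | i <;> rcases v with a'' | b'' | j <;> simp only [wovE] at huv
  · simp only [distToBlue, wovW]
    split_ifs with hshared hj hj
    · rfl
    · exact_mod_cast (by omega : t + 1 ≤ t + (2 * t + 2))
    · exact absurd ⟨j, huv, hj⟩ hshared
    · exact_mod_cast (by omega : 3 * t + 2 ≤ t + (2 * t + 2))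
  · simp only [distToBlue, wovW]
    split_ifs <;> exact_mod_cast (by omega)
  · rcases eq_or_ne b'' b with rfl | hne
    · simp [distToBlue, wovW, huv]
    · simp [distToBlue, wovW, hne]

lemma distToBlue_inl_of_orthogonal (b : β) {a : α}
    (horth : ∀ i : Fin d, ¬ (vA a i = true ∧ vB b i = true)) :
    distToBlue t vA vB b (Sum.inl a) = ((3 * t + 2 : ℕ) : ENNReal) := by
  simp [distToBlue, horth]

lemma not_wovE_inr_inl (b : β) (v : α ⊕ (β ⊕ Fin d)) : ¬ wovE d vA vB (Sum.inr (Sum.inl b)) v := by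
  rcases v with _ | _ | _ <;> exact id

end WeightedOV

theorem stmt16_general {α β : Type*} (t d : ℕ)
    (vA : α → Fin d → Bool) (vB : β → Fin d → Bool)
    (a : α) (b : β)
    (horth : ∀ i : Fin d, ¬ (vA a i = true ∧ vB b i = true)) :
    ((3 * t + 2 : ℕ) : ENNReal) ≤
        wdist (wovE d vA vB) (wovW t d) (Sum.inl a) (Sum.inr (Sum.inl b)) ∧
      ¬ Relation.ReflTransGen (wovE d vA vB)
          (Sum.inr (Sum.inl b)) (Sum.inl a) := by
  refine ⟨?_, ?_⟩
  · rw [← distToBlue_inl_of_orthogonal b horth]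
    exact le_wdist_of_potential (distToBlue_le_add b) (by simp [distToBlue])
  · rw [Relation.reflTransGen_iff_eq (not_wovE_inr_inl b)]
    simp

/-- YES case: if a ∈ A and b ∈ B are orthogonal, every directed path from a to
b has total weight at least 3t+2, and there is no path from b to a. -/
theorem stmt16 {α β : Type*} (t d : ℕ) (ht : 1 ≤ t)
    (vA : α → Fin d → Bool) (vB : β → Fin d → Bool)
    (honeA : ∀ a : α, ∃ i : Fin d, vA a i = true)
    (honeB : ∀ b : β, ∃ i : Fin d, vB b i = true)
    (a : α) (b : β)
    (horth : ∀ i : Fin d, ¬ (vA a i = true ∧ vB b i = true)) :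
    ((3 * t + 2 : ℕ) : ENNReal) ≤
        wdist (wovE d vA vB) (wovW t d) (Sum.inl a) (Sum.inr (Sum.inl b)) ∧
      ¬ Relation.ReflTransGen (wovE d vA vB)
          (Sum.inr (Sum.inl b)) (Sum.inl a) :=
  stmt16_general t d vA vB a b horth
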